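/- For t ∈ (0,1), the quantities λ₁(t) = 16√t/((3−√t)(1+√t)³) and λ₂(t) = (3+√t)(1−√t)³/((3−√t)(1+√t)³) lie in (0,1), and the two real-valued functions f₁(t) = 4·K(λ₁(t))/√((3−√t)(1+√t)³) and f₂(t) = 4·K(λ₂(t))/√((3−√t)(1+√t)³) are twice differentiable on (0,1) and each satisfies the sunrise differential equation L^{sun} f = 0 there. (These functions are, up to the constant factor i in the second one, the maximal cuts Ψ₁(t) and Ψ₂(t) of the two-loop equal-mass sunrise integral in d = 2 dimensions.) -/

import Mathlib

noncomputable section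

/-- The complete elliptic integral of the first kind,
`K(λ) = ∫₀¹ ds/√(s(1-s)(1-λs))`. -/
def EllK (lam : ℝ) : ℝ := ∫ s in (0 : ℝ)..1, 1 / Real.sqrt (s * (1 - s) * (1 - lam * s))

/-- `λ₁(t) = 16√t/((3-√t)(1+√t)³)`. -/
def lam1 (t : ℝ) : ℝ := 16 * Real.sqrt t / ((3 - Real.sqrt t) * (1 + Real.sqrt t) ^ 3)

/-- `λ₂(t) = (3+√t)(1-√t)³/((3-√t)(1+√t)³)`. -/
def lam2 (t : ℝ) : ℝ :=
  (3 + Real.sqrt t) * (1 - Real.sqrt t) ^ 3 / ((3 - Real.sqrt t) * (1 + Real.sqrt t) ^ 3)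

/-- `f₁(t) = 4·K(λ₁(t))/√((3-√t)(1+√t)³)`, the first maximal cut of the sunrise
integral. -/
def sunCut1 (t : ℝ) : ℝ :=
  4 * EllK (lam1 t) / Real.sqrt ((3 - Real.sqrt t) * (1 + Real.sqrt t) ^ 3)

/-- `f₂(t) = 4·K(λ₂(t))/√((3-√t)(1+√t)³)`, the second maximal cut of the sunrise
integral (up to a factor `i`). -/
def sunCut2 (t : ℝ) : ℝ :=
  4 * EllK (lam2 t) / Real.sqrt ((3 - Real.sqrt t) * (1 + Real.sqrt t) ^ 3)

/-- The sunrise differential operator, acting on real-valued functions of a real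
variable. -/
def LsunRR (f : ℝ → ℝ) (t : ℝ) : ℝ :=
  deriv (deriv f) t + (1 / (t - 9) + 1 / (t - 1) + 1 / t) * deriv f t
    + (1 / (12 * (t - 9)) + 1 / (4 * (t - 1)) - 1 / (3 * t)) * f t

open Set MeasureTheory Filter intervalIntegral
open scoped Interval

namespace SA

def Nfun (t : ℝ) : ℝ := (3 - Real.sqrt t) * (1 + Real.sqrt t) ^ 3
def N1fun (t : ℝ) : ℝ := (8 + 12 * Real.sqrt t - 4 * Real.sqrt t ^ 3) / (2 * Real.sqrt t)
def N2fun (t : ℝ) : ℝ := (-2) * (1 + Real.sqrt t ^ 3) / Real.sqrt t ^ 3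
def Ma (t : ℝ) : ℝ := 16 * Real.sqrt t
def Ma1 (t : ℝ) : ℝ := 8 / Real.sqrt t
def Ma2 (t : ℝ) : ℝ := (-4) / Real.sqrt t ^ 3
def Mb (t : ℝ) : ℝ := (3 + Real.sqrt t) * (1 - Real.sqrt t) ^ 3
def Mb1 (t : ℝ) : ℝ := (-8 + 12 * Real.sqrt t - 4 * Real.sqrt t ^ 3) / (2 * Real.sqrt t)
def Mb2 (t : ℝ) : ℝ := 2 * (1 - Real.sqrt t ^ 3) / Real.sqrt t ^ 3

section derivs
variable {t : ℝ} (ht : t ∈ Set.Ioo (0:ℝ) 1)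
include ht

lemma sqrt_pos' : 0 < Real.sqrt t := Real.sqrt_pos.mpr ht.1
lemma sq_sqrt' : Real.sqrt t ^ 2 = t := Real.sq_sqrt ht.1.le
lemma sqrt_lt_one' : Real.sqrt t < 1 := by
  have := Real.sqrt_lt_sqrt ht.1.le ht.2
  simpa using this

lemma hasDerivAt_sqrt' : HasDerivAt Real.sqrt (1 / (2 * Real.sqrt t)) t :=
  Real.hasDerivAt_sqrt (ne_of_gt ht.1)

lemma hasDerivAt_Nfun : HasDerivAt Nfun (N1fun t) t := by
  have hu := sqrt_pos' ht
  have h := hasDerivAt_sqrt' ht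
  have : HasDerivAt (fun t => (3 - Real.sqrt t) * (1 + Real.sqrt t) ^ 3)
      ((0 - 1 / (2 * Real.sqrt t)) * (1 + Real.sqrt t) ^ 3 +
        (3 - Real.sqrt t) * (3 * (1 + Real.sqrt t) ^ (3-1) * (0 + 1 / (2 * Real.sqrt t)))) t :=
    ((hasDerivAt_const t 3).sub h).mul (((hasDerivAt_const t 1).add h).pow 3)
  refine this.congr_deriv (Eq.symm ?_)
  unfold N1fun
  field_simp
  ring

lemma hasDerivAt_N1fun : HasDerivAt N1fun (N2fun t) t := by
  have hu := sqrt_pos' ht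
  have h := hasDerivAt_sqrt' ht
  have hnum : HasDerivAt (fun t => 8 + 12 * Real.sqrt t - 4 * Real.sqrt t ^ 3)
      (0 + 12 * (1 / (2 * Real.sqrt t)) - 4 * (3 * Real.sqrt t ^ (3-1) * (1 / (2 * Real.sqrt t)))) t :=
    ((hasDerivAt_const t 8).add (h.const_mul 12)).sub ((h.pow 3).const_mul 4)
  have hden : HasDerivAt (fun t => 2 * Real.sqrt t) (2 * (1 / (2 * Real.sqrt t))) t :=
    h.const_mul 2
  have := hnum.div hden (by positivity)
  refine this.congr_deriv (Eq.symm ?_)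
  unfold N2fun
  rw [eq_div_iff (by positivity)]
  field_simp
  ring

lemma hasDerivAt_Ma : HasDerivAt Ma (Ma1 t) t := by
  have hu := sqrt_pos' ht
  have := (hasDerivAt_sqrt' ht).const_mul 16
  refine this.congr_deriv (Eq.symm ?_)
  unfold Ma1; field_simp; ring

lemma hasDerivAt_Ma1 : HasDerivAt Ma1 (Ma2 t) t := by
  have hu := sqrt_pos' ht
  have := (hasDerivAt_const t (8:ℝ)).div (hasDerivAt_sqrt' ht) (ne_of_gt hu)
  refine this.congr_deriv (Eq.symm ?_)
  unfold Ma2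
  field_simp
  ring

lemma hasDerivAt_Mb : HasDerivAt Mb (Mb1 t) t := by
  have hu := sqrt_pos' ht
  have h := hasDerivAt_sqrt' ht
  have : HasDerivAt (fun t => (3 + Real.sqrt t) * (1 - Real.sqrt t) ^ 3)
      ((0 + 1 / (2 * Real.sqrt t)) * (1 - Real.sqrt t) ^ 3 +
        (3 + Real.sqrt t) * (3 * (1 - Real.sqrt t) ^ (3-1) * (0 - 1 / (2 * Real.sqrt t)))) t :=
    ((hasDerivAt_const t 3).add h).mul (((hasDerivAt_const t 1).sub h).pow 3)
  refine this.congr_deriv (Eq.symm ?_)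
  unfold Mb1
  field_simp
  ring

lemma hasDerivAt_Mb1 : HasDerivAt Mb1 (Mb2 t) t := by
  have hu := sqrt_pos' ht
  have h := hasDerivAt_sqrt' ht
  have hnum : HasDerivAt (fun t => -8 + 12 * Real.sqrt t - 4 * Real.sqrt t ^ 3)
      (0 + 12 * (1 / (2 * Real.sqrt t)) - 4 * (3 * Real.sqrt t ^ (3-1) * (1 / (2 * Real.sqrt t)))) t :=
    ((hasDerivAt_const t (-8:ℝ)).add (h.const_mul 12)).sub ((h.pow 3).const_mul 4)
  have hden : HasDerivAt (fun t => 2 * Real.sqrt t) (2 * (1 / (2 * Real.sqrt t))) t :=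
    h.const_mul 2
  have := hnum.div hden (by positivity)
  refine this.congr_deriv (Eq.symm ?_)
  unfold Mb2
  rw [eq_div_iff (by positivity)]
  field_simp
  ring

end derivs

lemma certA_u {u : ℝ} (hu : 0 < u) (hu1 : u < 1) (s : ℝ) :
    3*((8+12*u-4*u^3)/(2*u) - 8/u*s)^2
      - 2*((-2)*(1+u^3)/u^3 - (-4)/u^3*s)*((3-u)*(1+u)^3 - 16*u*s)
      - 2*(1/(u^2-9)+1/(u^2-1)+1/u^2)*((8+12*u-4*u^3)/(2*u) - 8/u*s)*((3-u)*(1+u)^3 - 16*u*s)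
      + 4*(1/(12*(u^2-9))+1/(4*(u^2-1))-1/(3*u^2))*((3-u)*(1+u)^3 - 16*u*s)^2
    = ((1-2*s)/2) * (72*(1-u^2)/(u*u^2*(u^2-9))) * ((3-u)*(1+u)^3 - 16*u*s)
      + (3/2) * (72*(1-u^2)/(u*u^2*(u^2-9))) * (16*u) * (s*(1-s)) := by
  have h1 : u ≠ 0 := ne_of_gt hu
  have h2 : u^2 - 1 ≠ 0 := by nlinarith
  have h3 : u^2 - 9 ≠ 0 := by nlinarith
  field_simp
  ring

lemma certB_u {u : ℝ} (hu : 0 < u) (hu1 : u < 1) (s : ℝ) :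
    3*((8+12*u-4*u^3)/(2*u) - (-8+12*u-4*u^3)/(2*u)*s)^2
      - 2*((-2)*(1+u^3)/u^3 - 2*(1-u^3)/u^3*s)*((3-u)*(1+u)^3 - (3+u)*(1-u)^3*s)
      - 2*(1/(u^2-9)+1/(u^2-1)+1/u^2)*((8+12*u-4*u^3)/(2*u) - (-8+12*u-4*u^3)/(2*u)*s)
          *((3-u)*(1+u)^3 - (3+u)*(1-u)^3*s)
      + 4*(1/(12*(u^2-9))+1/(4*(u^2-1))-1/(3*u^2))*((3-u)*(1+u)^3 - (3+u)*(1-u)^3*s)^2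
    = ((1-2*s)/2) * (72*(1-u^2)/(u*u^2*(u^2-9))) * ((3-u)*(1+u)^3 - (3+u)*(1-u)^3*s)
      + (3/2) * (72*(1-u^2)/(u*u^2*(u^2-9))) * ((3+u)*(1-u)^3) * (s*(1-s)) := by
  have h1 : u ≠ 0 := ne_of_gt hu
  have h2 : u^2 - 1 ≠ 0 := by nlinarith
  have h3 : u^2 - 9 ≠ 0 := by nlinarith
  field_simp
  ring


def bnd (s : ℝ) : ℝ := 1 / Real.sqrt s + 1 / Real.sqrt (1 - s)

lemma one_div_sqrt_eq (s : ℝ) : 1 / Real.sqrt s = s ^ (-(1/2) : ℝ) := by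
  rcases le_or_gt 0 s with hs | hs
  · rw [Real.rpow_neg hs, ← Real.sqrt_eq_rpow, one_div]
  · have hz : Real.sqrt s = 0 := Real.sqrt_eq_zero_of_nonpos hs.le
    rw [hz, Real.rpow_def_of_neg hs,
      show (-(1/2) : ℝ) * Real.pi = -(Real.pi/2) by ring, Real.cos_neg,
      Real.cos_pi_div_two]
    simp

lemma bnd_nonneg (s : ℝ) : 0 ≤ bnd s := by
  unfold bnd; positivity

lemma bnd_integrable : IntervalIntegrable bnd volume 0 1 := by
  have h1 : IntervalIntegrable (fun s : ℝ => 1 / Real.sqrt s) volume 0 1 := by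
    simp only [one_div_sqrt_eq]
    exact intervalIntegrable_rpow' (by norm_num)
  have h2 : IntervalIntegrable (fun s : ℝ => 1 / Real.sqrt (1 - s)) volume 0 1 := by
    simpa using (h1.comp_sub_left 1).symm
  exact h1.add h2

lemma inv_sqrt_mul_le {s : ℝ} (h0 : 0 < s) (h1 : s < 1) :
    1 / Real.sqrt (s * (1 - s)) ≤ 2 * bnd s := by
  have h1s : 0 < 1 - s := by linarith
  have key : ∀ x y : ℝ, 0 < x → 0 < y → x / 4 ≤ x * y →
      1 / Real.sqrt (x * y) ≤ 2 / Real.sqrt x := by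
    intro x y hx hy hxy
    have hx4 : Real.sqrt (x / 4) = Real.sqrt x / 2 := by
      rw [show x / 4 = x / 2 ^ 2 by ring, Real.sqrt_div hx.le,
        Real.sqrt_sq (by norm_num : (0:ℝ) ≤ 2)]
    have hsx : Real.sqrt x / 2 ≤ Real.sqrt (x * y) := by
      rw [← hx4]; exact Real.sqrt_le_sqrt hxy
    have hp : 0 < Real.sqrt x / 2 := by positivity
    calc 1 / Real.sqrt (x * y) ≤ 1 / (Real.sqrt x / 2) :=
          one_div_le_one_div_of_le hp hsx
      _ = 2 / Real.sqrt x := by field_simp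
  rcases le_or_gt s (1/2) with h | h
  · have := key s (1 - s) h0 h1s (by nlinarith)
    have h2 : (0:ℝ) ≤ 1 / Real.sqrt (1 - s) := by positivity
    unfold bnd; calc 1 / Real.sqrt (s * (1-s)) ≤ 2 / Real.sqrt s := this
      _ ≤ 2 * (1 / Real.sqrt s + 1 / Real.sqrt (1 - s)) := by
          rw [div_eq_mul_one_div]; nlinarith
  · have := key (1 - s) s h1s h0 (by nlinarith)
    rw [mul_comm (1-s) s] at this
    have h2 : (0:ℝ) ≤ 1 / Real.sqrt s := by positivity
    unfold bnd; calc 1 / Real.sqrt (s * (1-s)) ≤ 2 / Real.sqrt (1-s) := this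
      _ ≤ 2 * (1 / Real.sqrt s + 1 / Real.sqrt (1 - s)) := by
          rw [div_eq_mul_one_div]; nlinarith


def pco (t : ℝ) : ℝ := 1/(t-9) + 1/(t-1) + 1/t
def qco (t : ℝ) : ℝ := 1/(12*(t-9)) + 1/(4*(t-1)) - 1/(3*t)
def cco (t : ℝ) : ℝ := 72*(1-t)/(Real.sqrt t * t * (t-9))

section Core
variable (Nf Mf N1f M1f N2f M2f : ℝ → ℝ)

def Gg (t s : ℝ) : ℝ := 4 / Real.sqrt (s * (1 - s) * (Nf t - Mf t * s))

def G1 (t s : ℝ) : ℝ :=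
  (-2) * (N1f t - M1f t * s) / ((Nf t - Mf t * s) * Real.sqrt (Nf t - Mf t * s))
    / Real.sqrt (s * (1 - s))

def G2 (t s : ℝ) : ℝ :=
  ((-2) * (N2f t - M2f t * s) * (Nf t - Mf t * s) + 3 * (N1f t - M1f t * s) ^ 2)
    / ((Nf t - Mf t * s) ^ 2 * Real.sqrt (Nf t - Mf t * s)) / Real.sqrt (s * (1 - s))

def FF (t : ℝ) : ℝ := ∫ s in (0:ℝ)..1, Gg Nf Mf t s

def FF1 (t : ℝ) : ℝ := ∫ s in (0:ℝ)..1, G1 Nf Mf N1f M1f t s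

variable {Nf Mf N1f M1f N2f M2f}

lemma derivGt {t s : ℝ} (hN : HasDerivAt Nf (N1f t) t) (hM : HasDerivAt Mf (M1f t) t)
    (hs0 : 0 < s) (hs1 : s < 1) (hV : 0 < Nf t - Mf t * s) :
    HasDerivAt (fun x => Gg Nf Mf x s) (G1 Nf Mf N1f M1f t s) t := by
  have hss : 0 < s * (1 - s) := by nlinarith
  have hX : HasDerivAt (fun x => s * (1 - s) * (Nf x - Mf x * s))
      (s * (1 - s) * (N1f t - M1f t * s)) t := (hN.sub (hM.mul_const s)).const_mul _
  have hXpos : 0 < s * (1 - s) * (Nf t - Mf t * s) := by positivity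
  have hsq := hX.sqrt (ne_of_gt hXpos)
  have hsqpos : 0 < Real.sqrt (s * (1 - s) * (Nf t - Mf t * s)) := Real.sqrt_pos.mpr hXpos
  have hdiv := (hasDerivAt_const t (4:ℝ)).div hsq (ne_of_gt hsqpos)
  refine hdiv.congr_deriv (Eq.symm ?_)
  unfold G1
  rw [Real.sqrt_mul hss.le]
  set a := Real.sqrt (s * (1 - s)) with hadef
  set b := Real.sqrt (Nf t - Mf t * s) with hbdef
  have ha : 0 < a := Real.sqrt_pos.mpr hss
  have hb : 0 < b := Real.sqrt_pos.mpr hV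
  have ha2 : a ^ 2 = s * (1 - s) := Real.sq_sqrt hss.le
  have hb2 : b ^ 2 = Nf t - Mf t * s := Real.sq_sqrt hV.le
  rw [← ha2, ← hb2]
  field_simp
  ring

lemma derivG1t {t s : ℝ} (hN1 : HasDerivAt N1f (N2f t) t) (hM1 : HasDerivAt M1f (M2f t) t)
    (hN : HasDerivAt Nf (N1f t) t) (hM : HasDerivAt Mf (M1f t) t)
    (hV : 0 < Nf t - Mf t * s) :
    HasDerivAt (fun x => G1 Nf Mf N1f M1f x s) (G2 Nf Mf N1f M1f N2f M2f t s) t := by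
  have hVt : HasDerivAt (fun x => Nf x - Mf x * s) (N1f t - M1f t * s) t :=
    hN.sub (hM.mul_const s)
  have hb : 0 < Real.sqrt (Nf t - Mf t * s) := Real.sqrt_pos.mpr hV
  have hsq := hVt.sqrt (ne_of_gt hV)
  have hnum : HasDerivAt (fun x => (-2 : ℝ) * (N1f x - M1f x * s))
      ((-2) * (N2f t - M2f t * s)) t := (hN1.sub (hM1.mul_const s)).const_mul _
  have hden := hVt.mul hsq
  have hdpos : 0 < (Nf t - Mf t * s) * Real.sqrt (Nf t - Mf t * s) := by positivity
  have hdiv := (hnum.div hden (ne_of_gt hdpos)).div_const (Real.sqrt (s * (1 - s)))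
  refine hdiv.congr_deriv (Eq.symm ?_)
  simp only [Pi.mul_apply, Pi.div_apply]
  unfold G2
  congr 1
  set b := Real.sqrt (Nf t - Mf t * s) with hbdef
  have hb2 : b ^ 2 = Nf t - Mf t * s := Real.sq_sqrt hV.le
  rw [← hb2]
  field_simp
  ring

lemma derivS {t s : ℝ} (hs0 : 0 < s) (hs1 : s < 1) (hV : 0 < Nf t - Mf t * s)
    (hcert : 3*(N1f t - M1f t*s)^2 - 2*(N2f t - M2f t*s)*(Nf t - Mf t*s)
        - 2*(pco t)*(N1f t - M1f t*s)*(Nf t - Mf t*s) + 4*(qco t)*(Nf t - Mf t*s)^2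
      = ((1-2*s)/2) * cco t * (Nf t - Mf t*s) + (3/2) * cco t * Mf t * (s*(1-s))) :
    HasDerivAt
      (fun σ => Real.sqrt (σ * (1 - σ)) *
        (cco t / ((Nf t - Mf t * σ) * Real.sqrt (Nf t - Mf t * σ))))
      (G2 Nf Mf N1f M1f N2f M2f t s + pco t * G1 Nf Mf N1f M1f t s + qco t * Gg Nf Mf t s)
      s := by
  have hss : 0 < s * (1 - s) := by nlinarith
  have h1 : HasDerivAt (fun σ : ℝ => σ * (1 - σ)) (1 - 2*s) s := by
    have := (hasDerivAt_id s).mul ((hasDerivAt_const s (1:ℝ)).sub (hasDerivAt_id s))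
    refine this.congr_deriv (Eq.symm ?_)
    simp
    ring
  have h2 := h1.sqrt (ne_of_gt hss)
  have hVs : HasDerivAt (fun σ => Nf t - Mf t * σ) (0 - Mf t * 1) s :=
    (hasDerivAt_const s (Nf t)).sub ((hasDerivAt_id s).const_mul (Mf t))
  have hbs := hVs.sqrt (ne_of_gt hV)
  have hden := hVs.mul hbs
  have hdpos : 0 < (Nf t - Mf t * s) * Real.sqrt (Nf t - Mf t * s) := by positivity
  have hfrac := (hasDerivAt_const s (cco t)).div hden (ne_of_gt hdpos)
  have hfin := h2.mul hfrac
  refine hfin.congr_deriv (Eq.symm ?_)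
  simp only [Pi.mul_apply, Pi.div_apply]
  unfold G2 G1 Gg
  rw [Real.sqrt_mul hss.le]
  set a := Real.sqrt (s * (1 - s)) with hadef
  set b := Real.sqrt (Nf t - Mf t * s) with hbdef
  have ha : 0 < a := Real.sqrt_pos.mpr hss
  have hb : 0 < b := Real.sqrt_pos.mpr hV
  have ha2 : a ^ 2 = s * (1 - s) := Real.sq_sqrt hss.le
  have hb2 : b ^ 2 = Nf t - Mf t * s := Real.sq_sqrt hV.le
  rw [← ha2, ← hb2] at hcert
  rw [← hb2]
  field_simp
  linear_combination 2 * hcert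


lemma measGg (t : ℝ) :
    AEStronglyMeasurable (Gg Nf Mf t) (volume.restrict (Ι (0:ℝ) 1)) := by
  have h : Measurable fun s : ℝ => Real.sqrt (s * (1 - s) * (Nf t - Mf t * s)) :=
    (Real.continuous_sqrt.comp (by continuity)).measurable
  exact (measurable_const.div h).aestronglyMeasurable

lemma measG1 (t : ℝ) :
    AEStronglyMeasurable (G1 Nf Mf N1f M1f t) (volume.restrict (Ι (0:ℝ) 1)) := by
  have h1 : Measurable fun s : ℝ => (-2) * (N1f t - M1f t * s) :=
    (continuous_const.mul (continuous_const.sub (continuous_const.mul continuous_id))).measurable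
  have h2 : Measurable fun s : ℝ => (Nf t - Mf t * s) * Real.sqrt (Nf t - Mf t * s) :=
    (((continuous_const.sub (continuous_const.mul continuous_id)).mul
      (Real.continuous_sqrt.comp (by continuity)))).measurable
  have h3 : Measurable fun s : ℝ => Real.sqrt (s * (1 - s)) :=
    (Real.continuous_sqrt.comp (by continuity)).measurable
  exact (((h1.div h2).div h3)).aestronglyMeasurable

lemma measG2 (t : ℝ) :
    AEStronglyMeasurable (G2 Nf Mf N1f M1f N2f M2f t) (volume.restrict (Ι (0:ℝ) 1)) := by
  have h1 : Measurable fun s : ℝ =>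
      (-2) * (N2f t - M2f t * s) * (Nf t - Mf t * s) + 3 * (N1f t - M1f t * s) ^ 2 :=
    (((continuous_const.mul (continuous_const.sub (continuous_const.mul continuous_id))).mul
      (continuous_const.sub (continuous_const.mul continuous_id))).add
      (continuous_const.mul ((continuous_const.sub
        (continuous_const.mul continuous_id)).pow 2))).measurable
  have h2 : Measurable fun s : ℝ => (Nf t - Mf t * s) ^ 2 * Real.sqrt (Nf t - Mf t * s) :=
    (((continuous_const.sub (continuous_const.mul continuous_id)).pow 2).mul
      (Real.continuous_sqrt.comp (by continuity))).measurable
  have h3 : Measurable fun s : ℝ => Real.sqrt (s * (1 - s)) :=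
    (Real.continuous_sqrt.comp (by continuity)).measurable
  exact (((h1.div h2).div h3)).aestronglyMeasurable

structure Hyp (Nf Mf N1f M1f N2f M2f : ℝ → ℝ) : Prop where
  hN : ∀ t ∈ Set.Ioo (0:ℝ) 1, HasDerivAt Nf (N1f t) t
  hN1 : ∀ t ∈ Set.Ioo (0:ℝ) 1, HasDerivAt N1f (N2f t) t
  hM : ∀ t ∈ Set.Ioo (0:ℝ) 1, HasDerivAt Mf (M1f t) t
  hM1 : ∀ t ∈ Set.Ioo (0:ℝ) 1, HasDerivAt M1f (M2f t) t
  hN2c : ContinuousOn N2f (Set.Ioo 0 1)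
  hM2c : ContinuousOn M2f (Set.Ioo 0 1)
  hNpos : ∀ t ∈ Set.Ioo (0:ℝ) 1, 0 < Nf t
  hNM : ∀ t ∈ Set.Ioo (0:ℝ) 1, 0 < Nf t - Mf t

lemma min_le_V {x s : ℝ} (hs : s ∈ Icc (0:ℝ) 1) :
    min (Nf x) (Nf x - Mf x) ≤ Nf x - Mf x * s := by
  rcases le_total 0 (Mf x) with h' | h'
  · exact le_trans (min_le_right _ _) (by nlinarith [hs.1, hs.2])
  · exact le_trans (min_le_left _ _) (by nlinarith [hs.1, hs.2])

/-- Local uniform bounds around a point of `Ioo 0 1`. -/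
lemma localBounds (h : Hyp Nf Mf N1f M1f N2f M2f) {t : ℝ} (ht : t ∈ Set.Ioo (0:ℝ) 1) :
    ∃ δ > 0, ∃ ε > 0, ∃ C > 0, Metric.closedBall t δ ⊆ Set.Ioo (0:ℝ) 1 ∧
      (∀ x ∈ Metric.closedBall t δ, ∀ s ∈ Icc (0:ℝ) 1, ε ≤ Nf x - Mf x * s) ∧
      (∀ x ∈ Metric.closedBall t δ,
        |Nf x| ≤ C ∧ |Mf x| ≤ C ∧ |N1f x| ≤ C ∧ |M1f x| ≤ C ∧ |N2f x| ≤ C ∧ |M2f x| ≤ C) := by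
  obtain ⟨δ₀, hδ₀, hball⟩ := Metric.isOpen_iff.mp isOpen_Ioo t ht
  set δ := δ₀ / 2 with hδdef
  have hδ : 0 < δ := by positivity
  set K := Metric.closedBall t δ with hKdef
  have hKsub : K ⊆ Set.Ioo (0:ℝ) 1 :=
    (Metric.closedBall_subset_ball (by linarith)).trans hball
  have hK : IsCompact K := isCompact_closedBall t δ
  have htK : t ∈ K := Metric.mem_closedBall_self hδ.le
  have cN : ContinuousOn Nf K := fun x hx => ((h.hN x (hKsub hx)).continuousAt).continuousWithinAt
  have cM : ContinuousOn Mf K := fun x hx => ((h.hM x (hKsub hx)).continuousAt).continuousWithinAt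
  have cN1 : ContinuousOn N1f K := fun x hx => ((h.hN1 x (hKsub hx)).continuousAt).continuousWithinAt
  have cM1 : ContinuousOn M1f K := fun x hx => ((h.hM1 x (hKsub hx)).continuousAt).continuousWithinAt
  have cN2 : ContinuousOn N2f K := h.hN2c.mono hKsub
  have cM2 : ContinuousOn M2f K := h.hM2c.mono hKsub
  -- lower bound
  obtain ⟨x₁, hx₁K, hmin1⟩ := hK.exists_isMinOn ⟨t, htK⟩ cN
  obtain ⟨x₂, hx₂K, hmin2⟩ := hK.exists_isMinOn ⟨t, htK⟩ (cN.sub cM)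
  have hε : 0 < min (Nf x₁) (Nf x₂ - Mf x₂) :=
    lt_min (h.hNpos x₁ (hKsub hx₁K)) (h.hNM x₂ (hKsub hx₂K))
  -- upper bound
  have csum : ContinuousOn
      (fun x => |Nf x| + |Mf x| + |N1f x| + |M1f x| + |N2f x| + |M2f x|) K := by
    exact ((((cN.abs.add cM.abs).add cN1.abs).add cM1.abs).add cN2.abs).add cM2.abs
  obtain ⟨C₀, hC₀⟩ := hK.exists_bound_of_continuousOn csum
  have habs : ∀ x ∈ K, |Nf x| + |Mf x| + |N1f x| + |M1f x| + |N2f x| + |M2f x| ≤ C₀ := by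
    intro x hx
    have h0 : (0:ℝ) ≤ |Nf x| + |Mf x| + |N1f x| + |M1f x| + |N2f x| + |M2f x| := by positivity
    have := hC₀ x hx
    rwa [Real.norm_eq_abs, abs_of_nonneg h0] at this
  have hC₀0 : (0:ℝ) ≤ C₀ := le_trans (by positivity) (habs t htK)
  refine ⟨δ, hδ, _, hε, C₀ + 1, by linarith, hKsub, ?_, ?_⟩
  · intro x hx s hs
    refine le_trans ?_ (min_le_V hs)
    exact le_min (le_trans (min_le_left _ _) (hmin1 hx)) (le_trans (min_le_right _ _) (hmin2 hx))
  · intro x hx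
    have hb := habs x hx
    refine ⟨?_, ?_, ?_, ?_, ?_, ?_⟩ <;>
      nlinarith [abs_nonneg (Nf x), abs_nonneg (Mf x), abs_nonneg (N1f x), abs_nonneg (M1f x),
        abs_nonneg (N2f x), abs_nonneg (M2f x)]

lemma abs_Gg_le {t s ε : ℝ} (hε : 0 < ε) (hVge : ε ≤ Nf t - Mf t * s)
    (hs0 : 0 < s) (hs1 : s < 1) :
    |Gg Nf Mf t s| ≤ 4 / Real.sqrt ε * (2 * bnd s) := by
  have hV : 0 < Nf t - Mf t * s := lt_of_lt_of_le hε hVge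
  have hss : 0 < s * (1 - s) := by nlinarith
  have ha : 0 < Real.sqrt (s * (1 - s)) := Real.sqrt_pos.mpr hss
  have hb : 0 < Real.sqrt (Nf t - Mf t * s) := Real.sqrt_pos.mpr hV
  have he : 0 < Real.sqrt ε := Real.sqrt_pos.mpr hε
  have hmono : Real.sqrt ε ≤ Real.sqrt (Nf t - Mf t * s) := Real.sqrt_le_sqrt hVge
  unfold Gg
  rw [Real.sqrt_mul hss.le, abs_div]
  rw [abs_of_nonneg (by norm_num : (0:ℝ) ≤ 4), abs_of_nonneg (by positivity)]
  calc 4 / (Real.sqrt (s * (1 - s)) * Real.sqrt (Nf t - Mf t * s))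
      ≤ 4 / (Real.sqrt (s * (1 - s)) * Real.sqrt ε) := by gcongr
    _ = (4 / Real.sqrt ε) * (1 / Real.sqrt (s * (1 - s))) := by
        field_simp
    _ ≤ (4 / Real.sqrt ε) * (2 * bnd s) :=
        mul_le_mul_of_nonneg_left (inv_sqrt_mul_le hs0 hs1) (by positivity)

lemma abs_G1_le {t s ε C : ℝ} (hε : 0 < ε) (hC : 0 < C) (hVge : ε ≤ Nf t - Mf t * s)
    (hv1 : |N1f t - M1f t * s| ≤ C) (hs0 : 0 < s) (hs1 : s < 1) :
    |G1 Nf Mf N1f M1f t s| ≤ 2 * C / (ε * Real.sqrt ε) * (2 * bnd s) := by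
  have hV : 0 < Nf t - Mf t * s := lt_of_lt_of_le hε hVge
  have hss : 0 < s * (1 - s) := by nlinarith
  have ha : 0 < Real.sqrt (s * (1 - s)) := Real.sqrt_pos.mpr hss
  have hb : 0 < Real.sqrt (Nf t - Mf t * s) := Real.sqrt_pos.mpr hV
  have he : 0 < Real.sqrt ε := Real.sqrt_pos.mpr hε
  have hmono : Real.sqrt ε ≤ Real.sqrt (Nf t - Mf t * s) := Real.sqrt_le_sqrt hVge
  have hden : ε * Real.sqrt ε ≤ (Nf t - Mf t * s) * Real.sqrt (Nf t - Mf t * s) := by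
    exact mul_le_mul hVge hmono he.le hV.le
  unfold G1
  rw [abs_div, abs_div]
  rw [abs_of_nonneg (by positivity : (0:ℝ) ≤ (Nf t - Mf t * s) * Real.sqrt (Nf t - Mf t * s)),
    abs_of_nonneg ha.le]
  have hnum : |(-2) * (N1f t - M1f t * s)| ≤ 2 * C := by
    rw [abs_mul]
    calc |(-2:ℝ)| * |N1f t - M1f t * s| = 2 * |N1f t - M1f t * s| := by norm_num
      _ ≤ 2 * C := by linarith
  calc |(-2) * (N1f t - M1f t * s)| / ((Nf t - Mf t * s) * Real.sqrt (Nf t - Mf t * s))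
        / Real.sqrt (s * (1 - s))
      ≤ (2 * C / (ε * Real.sqrt ε)) / Real.sqrt (s * (1 - s)) := by
        gcongr
    _ = (2 * C / (ε * Real.sqrt ε)) * (1 / Real.sqrt (s * (1 - s))) := by
        rw [div_eq_mul_one_div]
    _ ≤ 2 * C / (ε * Real.sqrt ε) * (2 * bnd s) :=
        mul_le_mul_of_nonneg_left (inv_sqrt_mul_le hs0 hs1) (by positivity)

lemma abs_G2_le {t s ε C : ℝ} (hε : 0 < ε) (hC : 0 < C) (hVge : ε ≤ Nf t - Mf t * s)
    (hv1 : |N1f t - M1f t * s| ≤ C) (hv2 : |N2f t - M2f t * s| ≤ C)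
    (hVle : Nf t - Mf t * s ≤ C) (hs0 : 0 < s) (hs1 : s < 1) :
    |G2 Nf Mf N1f M1f N2f M2f t s| ≤ 5 * C^2 / (ε^2 * Real.sqrt ε) * (2 * bnd s) := by
  have hV : 0 < Nf t - Mf t * s := lt_of_lt_of_le hε hVge
  have hss : 0 < s * (1 - s) := by nlinarith
  have ha : 0 < Real.sqrt (s * (1 - s)) := Real.sqrt_pos.mpr hss
  have hb : 0 < Real.sqrt (Nf t - Mf t * s) := Real.sqrt_pos.mpr hV
  have he : 0 < Real.sqrt ε := Real.sqrt_pos.mpr hε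
  have hmono : Real.sqrt ε ≤ Real.sqrt (Nf t - Mf t * s) := Real.sqrt_le_sqrt hVge
  have hden : ε^2 * Real.sqrt ε ≤ (Nf t - Mf t * s)^2 * Real.sqrt (Nf t - Mf t * s) := by
    have : ε^2 ≤ (Nf t - Mf t * s)^2 := by nlinarith
    exact mul_le_mul this hmono he.le (by positivity)
  have hnum : |(-2) * (N2f t - M2f t * s) * (Nf t - Mf t * s) + 3 * (N1f t - M1f t * s)^2|
      ≤ 5 * C^2 := by
    have h1 : |(-2) * (N2f t - M2f t * s) * (Nf t - Mf t * s)| ≤ 2 * C^2 := by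
      rw [abs_mul, abs_mul]
      have hVa : |Nf t - Mf t * s| ≤ C := by rw [abs_of_pos hV]; exact hVle
      calc |(-2:ℝ)| * |N2f t - M2f t * s| * |Nf t - Mf t * s|
          = 2 * (|N2f t - M2f t * s| * |Nf t - Mf t * s|) := by
            rw [show |(-2:ℝ)| = 2 by norm_num]; ring
        _ ≤ 2 * (C * C) := by
            have := mul_le_mul hv2 hVa (abs_nonneg _) hC.le
            linarith
        _ = 2 * C^2 := by ring
    have h2 : |3 * (N1f t - M1f t * s)^2| ≤ 3 * C^2 := by
      rw [abs_mul, abs_of_nonneg (by norm_num : (0:ℝ) ≤ 3), abs_pow]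
      have := pow_le_pow_left₀ (abs_nonneg (N1f t - M1f t * s)) hv1 2
      nlinarith
    calc |(-2) * (N2f t - M2f t * s) * (Nf t - Mf t * s) + 3 * (N1f t - M1f t * s)^2|
        ≤ |(-2) * (N2f t - M2f t * s) * (Nf t - Mf t * s)| + |3 * (N1f t - M1f t * s)^2| :=
          abs_add_le _ _
      _ ≤ 5 * C^2 := by linarith
  unfold G2
  rw [abs_div, abs_div]
  rw [abs_of_nonneg (by positivity :
      (0:ℝ) ≤ (Nf t - Mf t * s)^2 * Real.sqrt (Nf t - Mf t * s)), abs_of_nonneg ha.le]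
  calc |(-2) * (N2f t - M2f t * s) * (Nf t - Mf t * s) + 3 * (N1f t - M1f t * s)^2|
        / ((Nf t - Mf t * s)^2 * Real.sqrt (Nf t - Mf t * s)) / Real.sqrt (s * (1 - s))
      ≤ (5 * C^2 / (ε^2 * Real.sqrt ε)) / Real.sqrt (s * (1 - s)) := by
        gcongr
    _ = (5 * C^2 / (ε^2 * Real.sqrt ε)) * (1 / Real.sqrt (s * (1 - s))) := by
        rw [div_eq_mul_one_div]
    _ ≤ 5 * C^2 / (ε^2 * Real.sqrt ε) * (2 * bnd s) :=
        mul_le_mul_of_nonneg_left (inv_sqrt_mul_le hs0 hs1) (by positivity)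

lemma ae_ne_one : ∀ᵐ s : ℝ, s ≠ (1:ℝ) := by
  have h : {s : ℝ | ¬ s ≠ 1} = {1} := by ext x; simp
  rw [ae_iff, h]
  exact measure_singleton 1

lemma FF_deriv (h : Hyp Nf Mf N1f M1f N2f M2f) {t : ℝ} (ht : t ∈ Set.Ioo (0:ℝ) 1) :
    IntervalIntegrable (Gg Nf Mf t) volume 0 1 ∧
    IntervalIntegrable (G1 Nf Mf N1f M1f t) volume 0 1 ∧
    IntervalIntegrable (G2 Nf Mf N1f M1f N2f M2f t) volume 0 1 ∧
    HasDerivAt (FF Nf Mf) (FF1 Nf Mf N1f M1f t) t ∧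
    HasDerivAt (FF1 Nf Mf N1f M1f) (∫ s in (0:ℝ)..1, G2 Nf Mf N1f M1f N2f M2f t s) t := by
  obtain ⟨δ, hδ, ε, hε, C, hC, hsub, hVge, hbounds⟩ := localBounds h ht
  have htK : t ∈ Metric.closedBall t δ := Metric.mem_closedBall_self hδ.le
  have hball : Metric.ball t δ ⊆ Metric.closedBall t δ := Metric.ball_subset_closedBall
  have haes : ∀ᵐ s : ℝ, s ∈ Ι (0:ℝ) 1 → 0 < s ∧ s < 1 := by
    filter_upwards [ae_ne_one] with s hs1 hmem
    rw [uIoc_of_le (by norm_num : (0:ℝ) ≤ 1)] at hmem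
    exact ⟨hmem.1, lt_of_le_of_ne hmem.2 hs1⟩
  have hv1b : ∀ x ∈ Metric.closedBall t δ, ∀ s ∈ Icc (0:ℝ) 1,
      |N1f x - M1f x * s| ≤ 2 * C := by
    intro x hx s hs
    obtain ⟨-, -, h3, h4, -, -⟩ := hbounds x hx
    calc |N1f x - M1f x * s| ≤ |N1f x| + |M1f x * s| := abs_sub _ _
      _ ≤ C + C * 1 := by
          rw [abs_mul]
          have : |s| ≤ 1 := by rw [abs_of_nonneg hs.1]; exact hs.2
          have h7 := mul_le_mul h4 this (abs_nonneg s) hC.le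
          exact add_le_add h3 h7
      _ = 2 * C := by ring
  have hv2b : ∀ x ∈ Metric.closedBall t δ, ∀ s ∈ Icc (0:ℝ) 1,
      |N2f x - M2f x * s| ≤ 2 * C := by
    intro x hx s hs
    obtain ⟨-, -, -, -, h5, h6⟩ := hbounds x hx
    calc |N2f x - M2f x * s| ≤ |N2f x| + |M2f x * s| := abs_sub _ _
      _ ≤ C + C * 1 := by
          rw [abs_mul]
          have hsab : |s| ≤ 1 := by rw [abs_of_nonneg hs.1]; exact hs.2
          have h7 := mul_le_mul h6 hsab (abs_nonneg s) hC.le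
          exact add_le_add h5 h7
      _ = 2 * C := by ring
  have hVleb : ∀ x ∈ Metric.closedBall t δ, ∀ s ∈ Icc (0:ℝ) 1,
      Nf x - Mf x * s ≤ 2 * C := by
    intro x hx s hs
    obtain ⟨h1, h2, -, -, -, -⟩ := hbounds x hx
    have hsab : |s| ≤ 1 := by rw [abs_of_nonneg hs.1]; exact hs.2
    calc Nf x - Mf x * s ≤ |Nf x - Mf x * s| := le_abs_self _
      _ ≤ |Nf x| + |Mf x * s| := abs_sub _ _
      _ ≤ C + C * 1 := by
          rw [abs_mul]
          have h7 := mul_le_mul h2 hsab (abs_nonneg s) hC.le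
          exact add_le_add h1 h7
      _ = 2 * C := by ring
  -- integrability of Gg t
  have hGbint : IntervalIntegrable (fun s => 4 / Real.sqrt ε * (2 * bnd s)) volume 0 1 :=
    (bnd_integrable.const_mul 2).const_mul _
  have hGle : (fun s => ‖Gg Nf Mf t s‖) ≤ᵐ[volume.restrict (Ι (0:ℝ) 1)]
      fun s => 4 / Real.sqrt ε * (2 * bnd s) := by
    rw [EventuallyLE, ae_restrict_iff' measurableSet_uIoc]
    filter_upwards [haes] with s hs hmem
    obtain ⟨hs0, hs1'⟩ := hs hmem
    rw [Real.norm_eq_abs]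
    exact abs_Gg_le hε (hVge t htK s ⟨hs0.le, hs1'.le⟩) hs0 hs1'
  have hGint : IntervalIntegrable (Gg Nf Mf t) volume 0 1 :=
    hGbint.mono_fun' (measGg t) hGle
  -- first dominated application
  have hbound1 : ∀ᵐ s : ℝ, s ∈ Ι (0:ℝ) 1 → ∀ x ∈ Metric.ball t δ,
      ‖G1 Nf Mf N1f M1f x s‖ ≤ 2 * (2*C) / (ε * Real.sqrt ε) * (2 * bnd s) := by
    filter_upwards [haes] with s hs hmem x hx
    obtain ⟨hs0, hs1'⟩ := hs hmem
    rw [Real.norm_eq_abs]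
    exact abs_G1_le hε (by linarith) (hVge x (hball hx) s ⟨hs0.le, hs1'.le⟩)
      (hv1b x (hball hx) s ⟨hs0.le, hs1'.le⟩) hs0 hs1'
  have hdiff1 : ∀ᵐ s : ℝ, s ∈ Ι (0:ℝ) 1 → ∀ x ∈ Metric.ball t δ,
      HasDerivAt (fun y => Gg Nf Mf y s) (G1 Nf Mf N1f M1f x s) x := by
    filter_upwards [haes] with s hs hmem x hx
    obtain ⟨hs0, hs1'⟩ := hs hmem
    have hxI := hsub (hball hx)
    exact derivGt (h.hN x hxI) (h.hM x hxI) hs0 hs1'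
      (lt_of_lt_of_le hε (hVge x (hball hx) s ⟨hs0.le, hs1'.le⟩))
  have key1 := intervalIntegral.hasDerivAt_integral_of_dominated_loc_of_deriv_le
    (𝕜 := ℝ) (μ := volume) (F := fun y s => Gg Nf Mf y s)
    (F' := fun y s => G1 Nf Mf N1f M1f y s) (x₀ := t)
    (bound := fun s => 2 * (2*C) / (ε * Real.sqrt ε) * (2 * bnd s)) (Metric.ball_mem_nhds t hδ)
    (Eventually.of_forall fun y => measGg y) hGint (measG1 t) hbound1
    ((bnd_integrable.const_mul 2).const_mul _) hdiff1
  -- second dominated application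
  have hbound2 : ∀ᵐ s : ℝ, s ∈ Ι (0:ℝ) 1 → ∀ x ∈ Metric.ball t δ,
      ‖G2 Nf Mf N1f M1f N2f M2f x s‖ ≤ 5 * (2*C)^2 / (ε^2 * Real.sqrt ε) * (2 * bnd s) := by
    filter_upwards [haes] with s hs hmem x hx
    obtain ⟨hs0, hs1'⟩ := hs hmem
    rw [Real.norm_eq_abs]
    exact abs_G2_le hε (by linarith) (hVge x (hball hx) s ⟨hs0.le, hs1'.le⟩)
      (hv1b x (hball hx) s ⟨hs0.le, hs1'.le⟩) (hv2b x (hball hx) s ⟨hs0.le, hs1'.le⟩)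
      (hVleb x (hball hx) s ⟨hs0.le, hs1'.le⟩) hs0 hs1'
  have hdiff2 : ∀ᵐ s : ℝ, s ∈ Ι (0:ℝ) 1 → ∀ x ∈ Metric.ball t δ,
      HasDerivAt (fun y => G1 Nf Mf N1f M1f y s) (G2 Nf Mf N1f M1f N2f M2f x s) x := by
    filter_upwards [haes] with s hs hmem x hx
    obtain ⟨hs0, hs1'⟩ := hs hmem
    have hxI := hsub (hball hx)
    exact derivG1t (h.hN1 x hxI) (h.hM1 x hxI) (h.hN x hxI) (h.hM x hxI)
      (lt_of_lt_of_le hε (hVge x (hball hx) s ⟨hs0.le, hs1'.le⟩))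
  have key2 := intervalIntegral.hasDerivAt_integral_of_dominated_loc_of_deriv_le
    (𝕜 := ℝ) (μ := volume) (F := fun y s => G1 Nf Mf N1f M1f y s)
    (F' := fun y s => G2 Nf Mf N1f M1f N2f M2f y s) (x₀ := t)
    (bound := fun s => 5 * (2*C)^2 / (ε^2 * Real.sqrt ε) * (2 * bnd s)) (Metric.ball_mem_nhds t hδ)
    (Eventually.of_forall fun y => measG1 y) key1.1 (measG2 t) hbound2
    ((bnd_integrable.const_mul 2).const_mul _) hdiff2
  exact ⟨hGint, key1.1, key2.1, key1.2, key2.2⟩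

lemma integral_W_zero (h : Hyp Nf Mf N1f M1f N2f M2f) {t : ℝ} (ht : t ∈ Set.Ioo (0:ℝ) 1)
    (hcert : ∀ s : ℝ,
      3*(N1f t - M1f t*s)^2 - 2*(N2f t - M2f t*s)*(Nf t - Mf t*s)
        - 2*(pco t)*(N1f t - M1f t*s)*(Nf t - Mf t*s) + 4*(qco t)*(Nf t - Mf t*s)^2
      = ((1-2*s)/2) * cco t * (Nf t - Mf t*s) + (3/2) * cco t * Mf t * (s*(1-s)))
    (hGint : IntervalIntegrable (Gg Nf Mf t) volume 0 1)
    (hG1int : IntervalIntegrable (G1 Nf Mf N1f M1f t) volume 0 1)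
    (hG2int : IntervalIntegrable (G2 Nf Mf N1f M1f N2f M2f t) volume 0 1) :
    ∫ s in (0:ℝ)..1, (G2 Nf Mf N1f M1f N2f M2f t s + pco t * G1 Nf Mf N1f M1f t s
      + qco t * Gg Nf Mf t s) = 0 := by
  have hVpos : ∀ s ∈ Icc (0:ℝ) 1, 0 < Nf t - Mf t * s := by
    intro s hs
    have := min_le_V (Nf := Nf) (Mf := Mf) (x := t) hs
    have h1 := h.hNpos t ht
    have h2 := h.hNM t ht
    have := lt_min h1 h2
    linarith [min_le_V (Nf := Nf) (Mf := Mf) (x := t) hs]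
  set B := fun σ : ℝ => Real.sqrt (σ * (1 - σ)) *
    (cco t / ((Nf t - Mf t * σ) * Real.sqrt (Nf t - Mf t * σ))) with hBdef
  have hBcont : ContinuousOn B (Icc (0:ℝ) 1) := by
    apply ContinuousOn.mul
    · exact (Real.continuous_sqrt.comp (by continuity)).continuousOn
    · apply ContinuousOn.div continuousOn_const
      · exact ((continuous_const.sub (continuous_const.mul continuous_id)).mul
          (Real.continuous_sqrt.comp (by continuity))).continuousOn
      · intro σ hσ
        have := hVpos σ hσ
        positivity
  have hWint : IntervalIntegrable (fun s => G2 Nf Mf N1f M1f N2f M2f t s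
      + pco t * G1 Nf Mf N1f M1f t s + qco t * Gg Nf Mf t s) volume 0 1 :=
    (hG2int.add (hG1int.const_mul _)).add (hGint.const_mul _)
  have hderiv : ∀ s ∈ Ioo (0:ℝ) 1, HasDerivWithinAt B
      (G2 Nf Mf N1f M1f N2f M2f t s + pco t * G1 Nf Mf N1f M1f t s
        + qco t * Gg Nf Mf t s) (Ioi s) s := by
    intro s hs
    exact (derivS hs.1 hs.2 (hVpos s ⟨hs.1.le, hs.2.le⟩) (hcert s)).hasDerivWithinAt
  have := intervalIntegral.integral_eq_sub_of_hasDeriv_right_of_le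
    (by norm_num : (0:ℝ) ≤ 1) hBcont hderiv hWint
  rw [this]
  have hB0 : B 0 = 0 := by simp [hBdef]
  have hB1 : B 1 = 0 := by simp [hBdef]
  rw [hB0, hB1, sub_zero]

lemma core (h : Hyp Nf Mf N1f M1f N2f M2f)
    (hcert : ∀ t ∈ Set.Ioo (0:ℝ) 1, ∀ s : ℝ,
      3*(N1f t - M1f t*s)^2 - 2*(N2f t - M2f t*s)*(Nf t - Mf t*s)
        - 2*(pco t)*(N1f t - M1f t*s)*(Nf t - Mf t*s) + 4*(qco t)*(Nf t - Mf t*s)^2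
      = ((1-2*s)/2) * cco t * (Nf t - Mf t*s) + (3/2) * cco t * Mf t * (s*(1-s)))
    (f : ℝ → ℝ) (hf : ∀ t ∈ Set.Ioo (0:ℝ) 1, f t = FF Nf Mf t) :
    ∀ t ∈ Set.Ioo (0:ℝ) 1, DifferentiableAt ℝ f t ∧ DifferentiableAt ℝ (deriv f) t ∧
      LsunRR f t = 0 := by
  intro t ht
  obtain ⟨hGint, hG1int, hG2int, hFd, hF1d⟩ := FF_deriv h ht
  have heq : f =ᶠ[nhds t] FF Nf Mf :=
    eventuallyEq_of_mem (Ioo_mem_nhds ht.1 ht.2) hf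
  have hdf : DifferentiableAt ℝ f t := hFd.differentiableAt.congr_of_eventuallyEq heq
  have hderiv_eq : ∀ t' ∈ Set.Ioo (0:ℝ) 1, deriv f t' = FF1 Nf Mf N1f M1f t' := by
    intro t' ht'
    obtain ⟨-, -, -, hFd', -⟩ := FF_deriv h ht'
    have heq' : f =ᶠ[nhds t'] FF Nf Mf :=
      eventuallyEq_of_mem (Ioo_mem_nhds ht'.1 ht'.2) hf
    rw [heq'.deriv_eq, hFd'.deriv]
  have heq2 : deriv f =ᶠ[nhds t] FF1 Nf Mf N1f M1f :=
    eventuallyEq_of_mem (Ioo_mem_nhds ht.1 ht.2) hderiv_eq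
  have hdf2 : DifferentiableAt ℝ (deriv f) t :=
    hF1d.differentiableAt.congr_of_eventuallyEq heq2
  refine ⟨hdf, hdf2, ?_⟩
  have hdd : deriv (deriv f) t = ∫ s in (0:ℝ)..1, G2 Nf Mf N1f M1f N2f M2f t s :=
    heq2.deriv_eq.trans hF1d.deriv
  have hsplit : ∫ s in (0:ℝ)..1, (G2 Nf Mf N1f M1f N2f M2f t s
      + pco t * G1 Nf Mf N1f M1f t s + qco t * Gg Nf Mf t s)
      = (∫ s in (0:ℝ)..1, G2 Nf Mf N1f M1f N2f M2f t s)
        + pco t * FF1 Nf Mf N1f M1f t + qco t * FF Nf Mf t := by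
    rw [intervalIntegral.integral_add (hG2int.add (hG1int.const_mul _)) (hGint.const_mul _),
      intervalIntegral.integral_add hG2int (hG1int.const_mul _),
      intervalIntegral.integral_const_mul, intervalIntegral.integral_const_mul]
    rfl
  have hzero := integral_W_zero h ht (hcert t ht) hGint hG1int hG2int
  have hLs : LsunRR f t = deriv (deriv f) t + pco t * deriv f t + qco t * f t := by
    simp [LsunRR, pco, qco]
  rw [hLs, hdd, hderiv_eq t ht, hf t ht, ← hsplit, hzero]

end Core

open SA in
lemma contN2fun : ContinuousOn N2fun (Set.Ioo (0:ℝ) 1) := by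
  intro t ht
  have h1 : ContinuousAt Real.sqrt t := Real.continuous_sqrt.continuousAt
  have hne : Real.sqrt t ^ 3 ≠ 0 := by
    have := Real.sqrt_pos.mpr ht.1; positivity
  exact ((continuousAt_const.mul (continuousAt_const.add (h1.pow 3))).div
    (h1.pow 3) hne).continuousWithinAt

lemma contMa2 : ContinuousOn Ma2 (Set.Ioo (0:ℝ) 1) := by
  intro t ht
  have h1 : ContinuousAt Real.sqrt t := Real.continuous_sqrt.continuousAt
  have hne : Real.sqrt t ^ 3 ≠ 0 := by
    have := Real.sqrt_pos.mpr ht.1; positivity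
  exact (continuousAt_const.div (h1.pow 3) hne).continuousWithinAt

lemma contMb2 : ContinuousOn Mb2 (Set.Ioo (0:ℝ) 1) := by
  intro t ht
  have h1 : ContinuousAt Real.sqrt t := Real.continuous_sqrt.continuousAt
  have hne : Real.sqrt t ^ 3 ≠ 0 := by
    have := Real.sqrt_pos.mpr ht.1; positivity
  exact ((continuousAt_const.mul (continuousAt_const.sub (h1.pow 3))).div
    (h1.pow 3) hne).continuousWithinAt

lemma Nfun_pos {t : ℝ} (ht : t ∈ Set.Ioo (0:ℝ) 1) : 0 < Nfun t := by
  have hu := sqrt_pos' ht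
  have hu1 := sqrt_lt_one' ht
  unfold Nfun
  exact mul_pos (by linarith) (pow_pos (by linarith) 3)

lemma NMa_pos {t : ℝ} (ht : t ∈ Set.Ioo (0:ℝ) 1) : 0 < Nfun t - Ma t := by
  have hu := sqrt_pos' ht
  have hu1 := sqrt_lt_one' ht
  have key : Nfun t - Ma t = (3 + Real.sqrt t) * (1 - Real.sqrt t) ^ 3 := by
    unfold Nfun Ma; ring
  rw [key]
  exact mul_pos (by linarith) (pow_pos (by linarith) 3)

lemma NMb_pos {t : ℝ} (ht : t ∈ Set.Ioo (0:ℝ) 1) : 0 < Nfun t - Mb t := by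
  have hu := sqrt_pos' ht
  have key : Nfun t - Mb t = 16 * Real.sqrt t := by
    unfold Nfun Mb; ring
  rw [key]; linarith

lemma hypA : Hyp Nfun Ma N1fun Ma1 N2fun Ma2 :=
  ⟨fun t ht => hasDerivAt_Nfun ht, fun t ht => hasDerivAt_N1fun ht,
   fun t ht => hasDerivAt_Ma ht, fun t ht => hasDerivAt_Ma1 ht,
   contN2fun, contMa2, fun t ht => Nfun_pos ht, fun t ht => NMa_pos ht⟩

lemma hypB : Hyp Nfun Mb N1fun Mb1 N2fun Mb2 :=
  ⟨fun t ht => hasDerivAt_Nfun ht, fun t ht => hasDerivAt_N1fun ht,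
   fun t ht => hasDerivAt_Mb ht, fun t ht => hasDerivAt_Mb1 ht,
   contN2fun, contMb2, fun t ht => Nfun_pos ht, fun t ht => NMb_pos ht⟩

lemma certA : ∀ t ∈ Set.Ioo (0:ℝ) 1, ∀ s : ℝ,
    3*(N1fun t - Ma1 t*s)^2 - 2*(N2fun t - Ma2 t*s)*(Nfun t - Ma t*s)
      - 2*(pco t)*(N1fun t - Ma1 t*s)*(Nfun t - Ma t*s) + 4*(qco t)*(Nfun t - Ma t*s)^2
    = ((1-2*s)/2) * cco t * (Nfun t - Ma t*s) + (3/2) * cco t * Ma t * (s*(1-s)) := by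
  intro t ht s
  have hu0 := sqrt_pos' ht
  have hu1 := sqrt_lt_one' ht
  have hut := sq_sqrt' ht
  unfold Nfun N1fun N2fun Ma Ma1 Ma2 pco qco cco
  set u := Real.sqrt t with hu
  rw [← hut]
  have := certA_u hu0 hu1 s
  linear_combination this

lemma certB : ∀ t ∈ Set.Ioo (0:ℝ) 1, ∀ s : ℝ,
    3*(N1fun t - Mb1 t*s)^2 - 2*(N2fun t - Mb2 t*s)*(Nfun t - Mb t*s)
      - 2*(pco t)*(N1fun t - Mb1 t*s)*(Nfun t - Mb t*s) + 4*(qco t)*(Nfun t - Mb t*s)^2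
    = ((1-2*s)/2) * cco t * (Nfun t - Mb t*s) + (3/2) * cco t * Mb t * (s*(1-s)) := by
  intro t ht s
  have hu0 := sqrt_pos' ht
  have hu1 := sqrt_lt_one' ht
  have hut := sq_sqrt' ht
  unfold Nfun N1fun N2fun Mb Mb1 Mb2 pco qco cco
  set u := Real.sqrt t with hu
  rw [← hut]
  have := certB_u hu0 hu1 s
  linear_combination this

end SA

open SA

lemma sunCut1_eq_FF {t : ℝ} (ht : t ∈ Set.Ioo (0:ℝ) 1) : sunCut1 t = FF Nfun Ma t := by
  have hN : 0 < Nfun t := Nfun_pos ht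
  have hNe : Nfun t ≠ 0 := ne_of_gt hN
  unfold sunCut1 EllK FF
  have h1 : (4:ℝ) * (∫ s in (0:ℝ)..1, 1 / Real.sqrt (s * (1 - s) * (1 - lam1 t * s)))
      / Real.sqrt ((3 - Real.sqrt t) * (1 + Real.sqrt t) ^ 3)
      = ∫ s in (0:ℝ)..1, (4 / Real.sqrt (Nfun t)) *
          (1 / Real.sqrt (s * (1 - s) * (1 - lam1 t * s))) := by
    rw [intervalIntegral.integral_const_mul]
    unfold Nfun
    ring
  rw [h1]
  apply intervalIntegral.integral_congr
  intro s _
  have hins : s * (1 - s) * (Nfun t - Ma t * s)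
      = Nfun t * (s * (1 - s) * (1 - lam1 t * s)) := by
    unfold lam1 Nfun Ma at *
    have h3 := left_ne_zero_of_mul hNe
    field_simp
  show (4 / Real.sqrt (Nfun t)) * (1 / Real.sqrt (s * (1 - s) * (1 - lam1 t * s)))
      = Gg Nfun Ma t s
  unfold Gg
  rw [hins, Real.sqrt_mul hN.le, div_mul_div_comm, mul_one]

lemma sunCut2_eq_FF {t : ℝ} (ht : t ∈ Set.Ioo (0:ℝ) 1) : sunCut2 t = FF Nfun Mb t := by
  have hN : 0 < Nfun t := Nfun_pos ht
  have hNe : Nfun t ≠ 0 := ne_of_gt hN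
  unfold sunCut2 EllK FF
  have h1 : (4:ℝ) * (∫ s in (0:ℝ)..1, 1 / Real.sqrt (s * (1 - s) * (1 - lam2 t * s)))
      / Real.sqrt ((3 - Real.sqrt t) * (1 + Real.sqrt t) ^ 3)
      = ∫ s in (0:ℝ)..1, (4 / Real.sqrt (Nfun t)) *
          (1 / Real.sqrt (s * (1 - s) * (1 - lam2 t * s))) := by
    rw [intervalIntegral.integral_const_mul]
    unfold Nfun
    ring
  rw [h1]
  apply intervalIntegral.integral_congr
  intro s _
  have hins : s * (1 - s) * (Nfun t - Mb t * s)
      = Nfun t * (s * (1 - s) * (1 - lam2 t * s)) := by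
    unfold lam2 Nfun Mb at *
    have h3 := left_ne_zero_of_mul hNe
    field_simp
  show (4 / Real.sqrt (Nfun t)) * (1 / Real.sqrt (s * (1 - s) * (1 - lam2 t * s)))
      = Gg Nfun Mb t s
  unfold Gg
  rw [hins, Real.sqrt_mul hN.le, div_mul_div_comm, mul_one]

/-- For `t ∈ (0,1)` the moduli `λ₁(t)`, `λ₂(t)` lie in `(0,1)`, and the two elliptic
integral expressions `f₁`, `f₂` are twice differentiable on `(0,1)` and satisfy the
sunrise differential equation `L^{sun} f = 0` there. -/
theorem sunrise_maximal_cuts :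
    (∀ t ∈ Set.Ioo (0 : ℝ) 1, lam1 t ∈ Set.Ioo (0 : ℝ) 1 ∧ lam2 t ∈ Set.Ioo (0 : ℝ) 1) ∧
    (∀ t ∈ Set.Ioo (0 : ℝ) 1, DifferentiableAt ℝ sunCut1 t ∧
      DifferentiableAt ℝ (deriv sunCut1) t ∧ LsunRR sunCut1 t = 0) ∧
    (∀ t ∈ Set.Ioo (0 : ℝ) 1, DifferentiableAt ℝ sunCut2 t ∧
      DifferentiableAt ℝ (deriv sunCut2) t ∧ LsunRR sunCut2 t = 0) := by
  refine ⟨?_, ?_, ?_⟩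
  · intro t ht
    have hu := SA.sqrt_pos' ht
    have hu1 := SA.sqrt_lt_one' ht
    have hN : 0 < (3 - Real.sqrt t) * (1 + Real.sqrt t) ^ 3 :=
      mul_pos (by linarith) (pow_pos (by linarith) 3)
    have hA : 0 < (3 + Real.sqrt t) * (1 - Real.sqrt t) ^ 3 :=
      mul_pos (by linarith) (pow_pos (by linarith) 3)
    have hid1 : (3 - Real.sqrt t) * (1 + Real.sqrt t) ^ 3 - 16 * Real.sqrt t
        = (3 + Real.sqrt t) * (1 - Real.sqrt t) ^ 3 := by ring
    have hid2 : (3 - Real.sqrt t) * (1 + Real.sqrt t) ^ 3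
        - (3 + Real.sqrt t) * (1 - Real.sqrt t) ^ 3 = 16 * Real.sqrt t := by ring
    unfold lam1 lam2
    refine ⟨⟨div_pos (by linarith) hN, ?_⟩, ⟨div_pos hA hN, ?_⟩⟩
    · rw [div_lt_one hN]; linarith
    · rw [div_lt_one hN]; linarith
  · exact core hypA certA sunCut1 (fun t ht => sunCut1_eq_FF ht)
  · exact core hypB certB sunCut2 (fun t ht => sunCut2_eq_FF ht)

end
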